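/- arXiv:1509.05129 — 8 statements merged into one kernel-verified Lean document; each statement's English description precedes it below -/
import Mathlib

section
/- If Y₁ and Y₂ are both maximum-weight closed sets for (A, w), then Y₁ ∪ Y₂ and Y₁ ∩ Y₂ are also maximum-weight closed sets for (A, w). -/
def ClosedFor {V : Type*} (A : V → V → Prop) (Y : Set V) : Prop :=
  ∀ i ∈ Y, ∀ j, A i j → j ∈ Y

noncomputable def pitWeight {V : Type*} [Fintype V] (w : V → ℝ) (Y : Set V) : ℝ :=
  ∑ i, Y.indicator w i

def IsMaxClosed {V : Type*} [Fintype V] (A : V → V → Prop) (w : V → ℝ) (Y : Set V) : Prop :=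
  ClosedFor A Y ∧ ∀ Z : Set V, ClosedFor A Z → pitWeight w Z ≤ pitWeight w Y

lemma pitWeight_modular {V : Type*} [Fintype V] (w : V → ℝ) (Y₁ Y₂ : Set V) :
    pitWeight w (Y₁ ∪ Y₂) + pitWeight w (Y₁ ∩ Y₂) = pitWeight w Y₁ + pitWeight w Y₂ := by
  classical
  unfold pitWeight
  rw [← Finset.sum_add_distrib, ← Finset.sum_add_distrib]
  apply Finset.sum_congr rfl
  intro i _
  by_cases h1 : i ∈ Y₁ <;> by_cases h2 : i ∈ Y₂ <;>
    simp [Set.indicator_apply, h1, h2]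

theorem union_inter_max_weight_closed {V : Type*} [Fintype V]
    (A : V → V → Prop) (w : V → ℝ) (Y₁ Y₂ : Set V)
    (h₁ : IsMaxClosed A w Y₁) (h₂ : IsMaxClosed A w Y₂) :
    IsMaxClosed A w (Y₁ ∪ Y₂) ∧ IsMaxClosed A w (Y₁ ∩ Y₂) := by
  obtain ⟨c₁, m₁⟩ := h₁
  obtain ⟨c₂, m₂⟩ := h₂
  have cu : ClosedFor A (Y₁ ∪ Y₂) := by
    rintro i (hi | hi) j hij
    · exact Or.inl (c₁ i hi j hij)
    · exact Or.inr (c₂ i hi j hij)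
  have ci : ClosedFor A (Y₁ ∩ Y₂) := by
    rintro i ⟨hi1, hi2⟩ j hij
    exact ⟨c₁ i hi1 j hij, c₂ i hi2 j hij⟩
  have hmod := pitWeight_modular w Y₁ Y₂
  have hu : pitWeight w (Y₁ ∪ Y₂) ≤ pitWeight w Y₁ := m₁ _ cu
  have hi : pitWeight w (Y₁ ∩ Y₂) ≤ pitWeight w Y₂ := m₂ _ ci
  have hu' : pitWeight w Y₁ ≤ pitWeight w (Y₁ ∪ Y₂) := by linarith
  have hi' : pitWeight w Y₂ ≤ pitWeight w (Y₁ ∩ Y₂) := by linarith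
  exact ⟨⟨cu, fun Z hZ => le_trans (m₁ Z hZ) hu'⟩,
         ⟨ci, fun Z hZ => le_trans (m₂ Z hZ) hi'⟩⟩
end

section
/- For every finite type V, relation A : V → V → Prop and weight function w : V → ℝ, there exists a greatest maximum-weight closed set: a maximum-weight closed set Y* for (A, w) such that every maximum-weight closed set for (A, w) is a subset of Y*. -/
/-! Closed sets are stable under union and intersection and the weight is modular,
`w(Y ∪ Z) + w(Y ∩ Z) = w Y + w Z`, so the union of two maximum-weight closed sets is again one.
There are finitely many of them, hence their union is the greatest one. -/

lemma ClosedFor.union {V : Type*} {A : V → V → Prop} {Y Z : Set V}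
    (hY : ClosedFor A Y) (hZ : ClosedFor A Z) : ClosedFor A (Y ∪ Z) := by
  rintro i (hi | hi) j hij
  · exact Or.inl (hY i hi j hij)
  · exact Or.inr (hZ i hi j hij)

lemma ClosedFor.inter {V : Type*} {A : V → V → Prop} {Y Z : Set V}
    (hY : ClosedFor A Y) (hZ : ClosedFor A Z) : ClosedFor A (Y ∩ Z) :=
  fun i hi j hij => ⟨hY i hi.1 j hij, hZ i hi.2 j hij⟩

lemma closedFor_empty {V : Type*} (A : V → V → Prop) : ClosedFor A ∅ :=
  fun _ hi => (Set.notMem_empty _ hi).elim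

lemma pitWeight_union_add_inter {V : Type*} [Fintype V] (w : V → ℝ) (Y Z : Set V) :
    pitWeight w (Y ∪ Z) + pitWeight w (Y ∩ Z) = pitWeight w Y + pitWeight w Z := by
  classical
  simp only [pitWeight, ← Finset.sum_add_distrib]
  refine Finset.sum_congr rfl fun i _ => ?_
  by_cases hY : i ∈ Y <;> by_cases hZ : i ∈ Z <;> simp [hY, hZ]

lemma exists_isMaxClosed {V : Type*} [Fintype V] (A : V → V → Prop) (w : V → ℝ) :
    ∃ Y, IsMaxClosed A w Y := by
  obtain ⟨Y, hY, hmax⟩ := Set.exists_max_image {Y | ClosedFor A Y} (pitWeight w)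
    (Set.toFinite _) ⟨∅, closedFor_empty A⟩
  exact ⟨Y, hY, hmax⟩

lemma IsMaxClosed.union {V : Type*} [Fintype V] {A : V → V → Prop} {w : V → ℝ} {Y Z : Set V}
    (hY : IsMaxClosed A w Y) (hZ : IsMaxClosed A w Z) : IsMaxClosed A w (Y ∪ Z) := by
  have h_inter : pitWeight w (Y ∩ Z) ≤ pitWeight w Y := hY.2 _ (hY.1.inter hZ.1)
  have h_union : pitWeight w Z ≤ pitWeight w (Y ∪ Z) := by
    linarith [pitWeight_union_add_inter w Y Z]
  exact ⟨hY.1.union hZ.1, fun W hW => (hZ.2 W hW).trans h_union⟩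

lemma supClosed_setOf_isMaxClosed {V : Type*} [Fintype V] (A : V → V → Prop) (w : V → ℝ) :
    SupClosed {Y | IsMaxClosed A w Y} :=
  fun _ hY _ hZ => hY.union hZ

theorem exists_greatest_max_weight_closed_set {V : Type*} [Fintype V]
    (A : V → V → Prop) (w : V → ℝ) :
    ∃ Ystar : Set V, IsMaxClosed A w Ystar ∧
      ∀ Y : Set V, IsMaxClosed A w Y → Y ⊆ Ystar := by
  set S := {Y | IsMaxClosed A w Y}
  refine ⟨sSup S, ?_, fun Y hY => le_sSup hY⟩
  exact (supClosed_setOf_isMaxClosed A w).sSup_mem_of_nonempty (Set.toFinite S)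
    (exists_isMaxClosed A w) le_rfl
end

section
/- Let w, w' : V → ℝ satisfy w' i ≤ w i for every i ∈ V. If Y' is a maximum-weight closed set for (A, w') and Y is a maximum-weight closed set for (A, w), then Y ∪ Y' is a maximum-weight closed set for (A, w). -/
lemma pit_split {V : Type*} [Fintype V] (w : V → ℝ) (S T : Set V) :
    pitWeight w (S ∪ T) = pitWeight w S + pitWeight w (T \ S) := by
  classical
  unfold pitWeight
  rw [← Finset.sum_add_distrib]
  refine Finset.sum_congr rfl fun i _ => ?_
  by_cases hS : i ∈ S <;> by_cases hT : i ∈ T <;>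
    simp [Set.indicator_apply, hS, hT]

lemma pit_mono {V : Type*} [Fintype V] (w w' : V → ℝ) (hle : ∀ i, w' i ≤ w i) (S : Set V) :
    pitWeight w' S ≤ pitWeight w S := by
  classical
  refine Finset.sum_le_sum fun i _ => ?_
  by_cases h : i ∈ S <;> simp [Set.indicator_apply, h, hle i]

theorem union_max_of_pointwise_le {V : Type*} [Fintype V]
    (A : V → V → Prop) (w w' : V → ℝ) (hle : ∀ i, w' i ≤ w i)
    (Y' Y : Set V) (hY' : IsMaxClosed A w' Y') (hY : IsMaxClosed A w Y) :
    IsMaxClosed A w (Y ∪ Y') := by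
  obtain ⟨hY'c, hY'opt⟩ := hY'
  obtain ⟨hYc, hYopt⟩ := hY
  have hUc : ClosedFor A (Y ∪ Y') := by
    rintro i (hi | hi) j hij
    · exact Or.inl (hYc i hi j hij)
    · exact Or.inr (hY'c i hi j hij)
  have hIc : ClosedFor A (Y ∩ Y') := fun i hi j hij =>
    ⟨hYc i hi.1 j hij, hY'c i hi.2 j hij⟩
  -- w'(Y' \ Y) ≥ 0
  have h1 : pitWeight w' Y' = pitWeight w' (Y ∩ Y') + pitWeight w' (Y' \ Y) := by
    have := pit_split w' (Y ∩ Y') Y'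
    rw [Set.union_eq_self_of_subset_left Set.inter_subset_right] at this
    have hset : Y' \ (Y ∩ Y') = Y' \ Y := by
      ext i; simp [Set.mem_diff, Set.mem_inter_iff]
    rw [this, hset]
  have hnn : 0 ≤ pitWeight w' (Y' \ Y) := by
    have := hY'opt (Y ∩ Y') hIc
    linarith
  have hnn' : 0 ≤ pitWeight w (Y' \ Y) :=
    le_trans hnn (pit_mono w w' hle _)
  refine ⟨hUc, fun Z hZ => ?_⟩
  have := hYopt Z hZ
  have hsplit := pit_split w Y Y'
  linarith
end

section
/- Let p, u : V → ℝ with u i ≥ 0 for every i ∈ V (nonnegative underground block values). Then every maximum-weight closed set for (A, p − u) (the opportunity-cost pit) is contained in the greatest maximum-weight closed set for (A, p) (the optimal pit ignoring the underground alternative). -/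
theorem opportunity_cost_pit_subset_of_greatest {V : Type*} [Fintype V]
    (A : V → V → Prop) (p u : V → ℝ) (hu : ∀ i, 0 ≤ u i)
    (Y : Set V) (hY : IsMaxClosed A (fun i => p i - u i) Y)
    (Ystar : Set V) (hYstar : IsMaxClosed A p Ystar)
    (hGreatest : ∀ Y' : Set V, IsMaxClosed A p Y' → Y' ⊆ Ystar) :
    Y ⊆ Ystar := by
  classical
  -- key identity: w(Y∪Z) + w(Y∩Z) = w(Y) + w(Z)
  have hadd : ∀ (w : V → ℝ) (S T : Set V),
      pitWeight w (S ∪ T) + pitWeight w (S ∩ T) = pitWeight w S + pitWeight w T := by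
    intro w S T
    unfold pitWeight
    rw [← Finset.sum_add_distrib, ← Finset.sum_add_distrib]
    apply Finset.sum_congr rfl
    intro i _
    by_cases hS : i ∈ S <;> by_cases hT : i ∈ T <;>
      simp [Set.indicator_apply, hS, hT]
  have hclosed_union : ClosedFor A (Y ∪ Ystar) := by
    rintro i (hi | hi) j hij
    · exact Or.inl (hY.1 i hi j hij)
    · exact Or.inr (hYstar.1 i hi j hij)
  have hclosed_inter : ClosedFor A (Y ∩ Ystar) := by
    rintro i ⟨h1, h2⟩ j hij
    exact ⟨hY.1 i h1 j hij, hYstar.1 i h2 j hij⟩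
  -- monotonicity of pitWeight u
  have humono : pitWeight u (Y ∩ Ystar) ≤ pitWeight u Y := by
    unfold pitWeight
    apply Finset.sum_le_sum
    intro i _
    by_cases h1 : i ∈ Y <;> by_cases h2 : i ∈ Ystar <;>
      simp [Set.indicator_apply, h1, h2, hu i]
  -- optimality of Y for p - u applied to Y ∩ Ystar
  have h1 := hY.2 (Y ∩ Ystar) hclosed_inter
  -- pitWeight (p - u) S = pitWeight p S - pitWeight u S
  have hsub : ∀ S : Set V, pitWeight (fun i => p i - u i) S = pitWeight p S - pitWeight u S := by
    intro S
    unfold pitWeight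
    rw [← Finset.sum_sub_distrib]
    apply Finset.sum_congr rfl
    intro i _
    by_cases h : i ∈ S <;> simp [Set.indicator_apply, h]
  rw [hsub, hsub] at h1
  have hp_inter_le : pitWeight p (Y ∩ Ystar) ≤ pitWeight p Y := by linarith
  have hkey := hadd p Y Ystar
  have h2 : pitWeight p Ystar ≤ pitWeight p (Y ∪ Ystar) := by linarith
  have hmax : IsMaxClosed A p (Y ∪ Ystar) := by
    refine ⟨hclosed_union, fun Z hZ => le_trans (hYstar.2 Z hZ) h2⟩
  have := hGreatest (Y ∪ Ystar) hmax
  exact fun x hx => this (Or.inl hx)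
end

section
/- Let U ⊆ V, let p, u : V → ℝ with u i ≥ 0 for all i and u i = 0 for i ∉ U, and in the layered digraph take D to be the empty relation and R i j ↔ (i = j ∧ i ∈ U) (an arc from each pit block to its own underground copy, for blocks with a defined underground value). Then the maximum of ∑_{x ∈ Z} w x over all closed sets Z ⊆ V ⊕ V (with w(Sum.inl i) = p i, w(Sum.inr i) = −u i) equals the maximum of ∑_{i ∈ Y} (p i − u i) over all sets Y ⊆ V closed for B. -/
def LayeredArc {V : Type*} (B R D : V → V → Prop) : (V ⊕ V) → (V ⊕ V) → Prop
  | Sum.inl i, Sum.inl j => B i j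
  | Sum.inl i, Sum.inr j => R i j
  | Sum.inr i, Sum.inr j => D i j
  | Sum.inr _, Sum.inl _ => False

noncomputable def layeredWeight {V : Type*} (p u : V → ℝ) : V ⊕ V → ℝ :=
  Sum.elim p (fun i => -u i)

theorem first_modification_same_maximum {V : Type*} [Fintype V]
    (B : V → V → Prop) (U : Set V) (p u : V → ℝ)
    (hu0 : ∀ i, 0 ≤ u i) (huU : ∀ i ∉ U, u i = 0) :
    ∃ M : ℝ,
      IsGreatest {x : ℝ | ∃ Z : Set (V ⊕ V),
        ClosedFor (LayeredArc B (fun i j => i = j ∧ i ∈ U) (fun _ _ => False)) Z ∧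
        x = pitWeight (layeredWeight p u) Z} M ∧
      IsGreatest {x : ℝ | ∃ Y : Set V, ClosedFor B Y ∧
        x = pitWeight (fun i => p i - u i) Y} M := by
  classical
  set A := LayeredArc B (fun i j : V => i = j ∧ i ∈ U) (fun _ _ => False) with hA
  set S₁ : Set ℝ := {x : ℝ | ∃ Z : Set (V ⊕ V), ClosedFor A Z ∧
      x = pitWeight (layeredWeight p u) Z} with hS₁
  set S₂ : Set ℝ := {x : ℝ | ∃ Y : Set V, ClosedFor B Y ∧
      x = pitWeight (fun i => p i - u i) Y} with hS₂
  -- S₂ is finite and nonempty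
  have hfin : S₂.Finite := by
    have hsub : S₂ ⊆ (fun Y : Set V => pitWeight (fun i => p i - u i) Y) '' Set.univ := by
      rintro x ⟨Y, _, rfl⟩; exact ⟨Y, trivial, rfl⟩
    exact (Set.finite_univ.image _).subset hsub
  have hne : S₂.Nonempty := ⟨_, ∅, by intro i hi _ _; exact absurd hi (Set.notMem_empty i), rfl⟩
  have hM₂ : IsGreatest S₂ (sSup S₂) :=
    ⟨hne.csSup_mem hfin, fun x hx => le_csSup hfin.bddAbove hx⟩
  set M := sSup S₂ with hM
  -- split the layered weight sum
  have wsum : ∀ Z : Set (V ⊕ V), pitWeight (layeredWeight p u) Z =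
      (∑ i, (Sum.inl ⁻¹' Z).indicator p i) +
        ∑ i, (Sum.inr ⁻¹' Z).indicator (fun i => -u i) i := by
    intro Z
    rw [pitWeight, Fintype.sum_sum_type]
    refine congrArg₂ (· + ·) (Finset.sum_congr rfl fun i _ => ?_)
      (Finset.sum_congr rfl fun i _ => ?_)
    · by_cases h : Sum.inl i ∈ Z <;> simp [Set.indicator, h, layeredWeight]
    · by_cases h : Sum.inr i ∈ Z <;> simp [Set.indicator, h, layeredWeight]
  refine ⟨M, ⟨?_, ?_⟩, hM₂⟩
  · -- M ∈ S₁
    obtain ⟨Y, hY, hval⟩ := hM₂.1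
    refine ⟨{z | Sum.elim (fun i => i ∈ Y) (fun i => i ∈ Y ∧ i ∈ U) z}, ?_, ?_⟩
    · rintro (i | i) hi (j | j) hij
      · exact hY i hi j hij
      · obtain ⟨rfl, hiU⟩ := hij; exact ⟨hi, hiU⟩
      · exact hij.elim
      · exact hij.elim
    · rw [hval, wsum]
      have h1 : Sum.inl ⁻¹' {z : V ⊕ V | Sum.elim (fun i => i ∈ Y) (fun i => i ∈ Y ∧ i ∈ U) z}
          = Y := rfl
      have h2 : Sum.inr ⁻¹' {z : V ⊕ V | Sum.elim (fun i => i ∈ Y) (fun i => i ∈ Y ∧ i ∈ U) z}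
          = {i | i ∈ Y ∧ i ∈ U} := rfl
      rw [h1, h2, pitWeight, ← Finset.sum_add_distrib]
      refine Finset.sum_congr rfl fun i _ => ?_
      by_cases hiY : i ∈ Y
      · by_cases hiU : i ∈ U
        · simp [Set.indicator, hiY, hiU]; ring
        · simp [Set.indicator, hiY, hiU, huU i hiU]
      · simp [Set.indicator, hiY]
  · -- upper bound for S₁
    rintro x ⟨Z, hZ, rfl⟩
    set Y := Sum.inl ⁻¹' Z with hYdef
    have hYclosed : ClosedFor B Y := by
      intro i hi j hij
      exact hZ (Sum.inl i) hi (Sum.inl j) hij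
    have hYU : ∀ i, i ∈ Y → i ∈ U → Sum.inr i ∈ Z := by
      intro i hi hiU
      exact hZ (Sum.inl i) hi (Sum.inr i) ⟨rfl, hiU⟩
    have hle : pitWeight (layeredWeight p u) Z ≤ pitWeight (fun i => p i - u i) Y := by
      rw [wsum, pitWeight]
      have : ∀ i : V, Y.indicator p i + (Sum.inr ⁻¹' Z).indicator (fun i => -u i) i ≤
          Y.indicator (fun i => p i - u i) i := by
        intro i
        by_cases hiY : i ∈ Y
        · by_cases hiU : i ∈ U
          · have hmem : i ∈ Sum.inr ⁻¹' Z := hYU i hiY hiU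
            simp [Set.indicator, hiY, hmem]
          · by_cases hmem : i ∈ Sum.inr ⁻¹' Z <;>
              simp [Set.indicator, hiY, hmem, huU i hiU, hu0 i]
        · by_cases hmem : i ∈ Sum.inr ⁻¹' Z <;>
            simp [Set.indicator, hiY, hmem, hu0 i]
      calc (∑ i, Y.indicator p i) + ∑ i, (Sum.inr ⁻¹' Z).indicator (fun i => -u i) i
          = ∑ i, (Y.indicator p i + (Sum.inr ⁻¹' Z).indicator (fun i => -u i) i) := by
            rw [Finset.sum_add_distrib]
        _ ≤ ∑ i, Y.indicator (fun i => p i - u i) i := Finset.sum_le_sum fun i _ => this i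
    exact hle.trans (hM₂.2 ⟨Y, hYclosed, rfl⟩)
end

section
/- Under the first-modification setup (U ⊆ V; u i ≥ 0 for all i; u i = 0 for i ∉ U; D empty; R i j ↔ (i = j ∧ i ∈ U); weights w(Sum.inl i) = p i, w(Sum.inr i) = −u i on V ⊕ V): if Z is a maximum-weight closed set of the layered digraph, then Y_Z = {i : Sum.inl i ∈ Z} is closed for B and attains the maximum of ∑_{i ∈ Y} (p i − u i) over all sets Y ⊆ V closed for B. -/
lemma pw_sub {V : Type*} [Fintype V] (p u : V → ℝ) (Y : Set V) :
    pitWeight (fun i => p i - u i) Y = pitWeight p Y - pitWeight u Y := by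
  unfold pitWeight
  rw [← Finset.sum_sub_distrib]
  apply Finset.sum_congr rfl
  intro i _
  by_cases h : i ∈ Y <;> simp [Set.indicator, h]

lemma pw_mono {V : Type*} [Fintype V] (u : V → ℝ) (hu : ∀ i, 0 ≤ u i)
    {S T : Set V} (h : S ⊆ T) : pitWeight u S ≤ pitWeight u T := by
  apply Finset.sum_le_sum
  intro i _
  exact Set.indicator_le_indicator_of_subset h hu i

lemma pw_layer {V : Type*} [Fintype V] (p u : V → ℝ) (Z : Set (V ⊕ V)) :
    pitWeight (layeredWeight p u) Z
      = pitWeight p {i | Sum.inl i ∈ Z} - pitWeight u {i | Sum.inr i ∈ Z} := by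
  unfold pitWeight layeredWeight
  rw [Fintype.sum_sum_type, sub_eq_add_neg, ← Finset.sum_neg_distrib]
  congr 1 <;> apply Finset.sum_congr rfl <;> intro i _ <;>
    · simp only [Set.indicator]
      split <;> simp_all

lemma pw_inter {V : Type*} [Fintype V] (u : V → ℝ) (U Y : Set V)
    (huU : ∀ i ∉ U, u i = 0) : pitWeight u (Y ∩ U) = pitWeight u Y := by
  apply Finset.sum_congr rfl
  intro i _
  by_cases hY : i ∈ Y
  · by_cases hU : i ∈ U
    · simp [Set.indicator, hY, hU]
    · simp [Set.indicator, hY, hU, huU i hU]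
  · simp [Set.indicator, hY]

theorem first_modification_pit_of_max_is_max {V : Type*} [Fintype V]
    (B : V → V → Prop) (U : Set V) (p u : V → ℝ)
    (hu0 : ∀ i, 0 ≤ u i) (huU : ∀ i ∉ U, u i = 0)
    (Z : Set (V ⊕ V))
    (hZ : IsMaxClosed (LayeredArc B (fun i j => i = j ∧ i ∈ U) (fun _ _ => False))
      (layeredWeight p u) Z) :
    ClosedFor B {i | Sum.inl i ∈ Z} ∧
      ∀ Y : Set V, ClosedFor B Y →
        pitWeight (fun i => p i - u i) Y ≤
          pitWeight (fun i => p i - u i) {i | Sum.inl i ∈ Z} := by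
  obtain ⟨hZc, hZmax⟩ := hZ
  refine ⟨fun i hi j hij => hZc (Sum.inl i) hi (Sum.inl j) hij, ?_⟩
  intro Y hY
  -- the lifted closed set of Y
  set ZY : Set (V ⊕ V) := (Sum.inl '' Y) ∪ (Sum.inr '' (Y ∩ U)) with hZY
  have hZYinl : ∀ i, Sum.inl i ∈ ZY ↔ i ∈ Y := by
    intro i; simp [hZY]
  have hZYinr : ∀ i, Sum.inr i ∈ ZY ↔ i ∈ Y ∩ U := by
    intro i; simp [hZY]
  have hZYc : ClosedFor (LayeredArc B (fun i j => i = j ∧ i ∈ U) (fun _ _ => False)) ZY := by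
    intro x hx y hxy
    cases x with
    | inl i =>
      cases y with
      | inl j =>
        exact (hZYinl j).2 (hY i ((hZYinl i).1 hx) j hxy)
      | inr j =>
        obtain ⟨rfl, hiU⟩ := hxy
        exact (hZYinr i).2 ⟨(hZYinl i).1 hx, hiU⟩
    | inr i =>
      cases y with
      | inl j => exact absurd hxy (by simp [LayeredArc])
      | inr j => exact absurd hxy (by simp [LayeredArc])
  have h1 : pitWeight (fun i => p i - u i) Y = pitWeight (layeredWeight p u) ZY := by
    rw [pw_layer, pw_sub]
    have e1 : {i | Sum.inl i ∈ ZY} = Y := Set.ext fun i => hZYinl i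
    have e2 : {i | Sum.inr i ∈ ZY} = Y ∩ U := Set.ext fun i => hZYinr i
    rw [e1, e2, pw_inter u U Y huU]
  have h2 : pitWeight (layeredWeight p u) Z ≤
      pitWeight (fun i => p i - u i) {i | Sum.inl i ∈ Z} := by
    rw [pw_layer, pw_sub]
    have hsub : {i | Sum.inl i ∈ Z} ⊆ {i | Sum.inr i ∈ Z} ∪ Uᶜ := by
      intro i hi
      by_cases hU : i ∈ U
      · exact Or.inl (hZc (Sum.inl i) hi (Sum.inr i) ⟨rfl, hU⟩)
      · exact Or.inr hU
    have : pitWeight u {i | Sum.inl i ∈ Z} ≤ pitWeight u {i | Sum.inr i ∈ Z} := by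
      calc pitWeight u {i | Sum.inl i ∈ Z}
          = pitWeight u ({i | Sum.inl i ∈ Z} ∩ U) := (pw_inter u U _ huU).symm
        _ ≤ pitWeight u {i | Sum.inr i ∈ Z} := by
            apply pw_mono u hu0
            intro i ⟨hi, hU⟩
            rcases hsub hi with h | h
            · exact h
            · exact absurd hU h
    linarith
  calc pitWeight (fun i => p i - u i) Y = pitWeight (layeredWeight p u) ZY := h1
    _ ≤ pitWeight (layeredWeight p u) Z := hZmax ZY hZYc
    _ ≤ _ := h2
end

section
/- Under the first-modification setup (U ⊆ V; u i ≥ 0 for all i; u i = 0 for i ∉ U; D empty; R i j ↔ (i = j ∧ i ∈ U); weights w(Sum.inl i) = p i, w(Sum.inr i) = −u i on V ⊕ V): if Y ⊆ V is closed for B and attains the maximum of ∑_{i ∈ Y'} (p i − u i) over all sets Y' closed for B, then Z = (Sum.inl '' Y) ∪ (Sum.inr '' (Y ∩ U)) is a maximum-weight closed set of the layered digraph. -/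
theorem first_modification_lift_of_max_is_max {V : Type*} [Fintype V]
    (B : V → V → Prop) (U : Set V) (p u : V → ℝ)
    (hu0 : ∀ i, 0 ≤ u i) (huU : ∀ i ∉ U, u i = 0)
    (Y : Set V) (hYclosed : ClosedFor B Y)
    (hYmax : ∀ Y' : Set V, ClosedFor B Y' →
      pitWeight (fun i => p i - u i) Y' ≤ pitWeight (fun i => p i - u i) Y) :
    IsMaxClosed (LayeredArc B (fun i j => i = j ∧ i ∈ U) (fun _ _ => False))
      (layeredWeight p u) ((Sum.inl '' Y) ∪ (Sum.inr '' (Y ∩ U))) := by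
  have key : ∀ (S : Set (V ⊕ V)), pitWeight (layeredWeight p u) S =
      (∑ i, ({i | Sum.inl i ∈ S}).indicator p i)
        - ∑ i, ({i | Sum.inr i ∈ S}).indicator u i := by
    intro S
    have h1 : ∀ i, S.indicator (layeredWeight p u) (Sum.inl i)
        = ({i | Sum.inl i ∈ S}).indicator p i := fun i => by
      by_cases h : Sum.inl i ∈ S <;>
        simp [Set.indicator_apply, layeredWeight, h, Set.mem_setOf_eq]
    have h2 : ∀ i, S.indicator (layeredWeight p u) (Sum.inr i)
        = -({i | Sum.inr i ∈ S}).indicator u i := fun i => by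
      by_cases h : Sum.inr i ∈ S <;>
        simp [Set.indicator_apply, layeredWeight, h, Set.mem_setOf_eq]
    rw [pitWeight, Fintype.sum_sum_type]
    simp only [h1, h2]
    rw [Finset.sum_neg_distrib]
    ring
  -- pointwise identity
  have point : ∀ (A' : Set V), (∀ i ∈ A', i ∉ U → u i = 0) →
      (∑ i, A'.indicator p i) - ∑ i, ((A' ∩ U)).indicator u i
        = pitWeight (fun i => p i - u i) A' := by
    intro A' hA'
    rw [pitWeight, ← Finset.sum_sub_distrib]
    refine Finset.sum_congr rfl fun i _ => ?_
    by_cases hi : i ∈ A'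
    · by_cases hiU : i ∈ U
      · simp [Set.indicator_apply, hi, hiU]
      · simp [Set.indicator_apply, hi, hiU, hA' i hi hiU]
    · simp [Set.indicator_apply, hi]
  constructor
  · rintro x hx y hxy
    cases x with
    | inl i =>
      have hiY : i ∈ Y := by
        rcases hx with ⟨i', hi', h⟩ | ⟨i', hi', h⟩
        · cases h; exact hi'
        · exact absurd h (by simp)
      cases y with
      | inl j => exact Or.inl ⟨j, hYclosed i hiY j hxy, rfl⟩
      | inr j =>
        obtain ⟨rfl, hU⟩ := hxy
        exact Or.inr ⟨i, ⟨hiY, hU⟩, rfl⟩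
    | inr i =>
      cases y with
      | inl j => exact absurd hxy (by simp [LayeredArc])
      | inr j => exact absurd hxy (by simp [LayeredArc])
  · intro Z hZ
    set A' : Set V := {i | Sum.inl i ∈ Z} with hA'def
    set B' : Set V := {i | Sum.inr i ∈ Z} with hB'def
    have hA'closed : ClosedFor B A' := fun i hi j hij => hZ (Sum.inl i) hi (Sum.inl j) hij
    have hsub : A' ∩ U ⊆ B' := fun i ⟨hi, hiU⟩ => hZ (Sum.inl i) hi (Sum.inr i) ⟨rfl, hiU⟩
    have h1 : ∑ i, ((A' ∩ U)).indicator u i ≤ ∑ i, B'.indicator u i := by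
      refine Finset.sum_le_sum fun i _ => Set.indicator_le_indicator_of_subset hsub hu0 i
    have hZY : {i | Sum.inl i ∈ (Sum.inl '' Y ∪ Sum.inr '' (Y ∩ U) : Set (V ⊕ V))} = Y := by
      ext i; simp
    have hZU : {i | Sum.inr i ∈ (Sum.inl '' Y ∪ Sum.inr '' (Y ∩ U) : Set (V ⊕ V))} = Y ∩ U := by
      ext i; simp
    rw [key, key, hZY, hZU, point Y (fun i _ hiU => huU i hiU)]
    calc (∑ i, A'.indicator p i) - ∑ i, B'.indicator u i
        ≤ (∑ i, A'.indicator p i) - ∑ i, ((A' ∩ U)).indicator u i := by linarith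
      _ = pitWeight (fun i => p i - u i) A' := point A' (fun i _ hiU => huU i hiU)
      _ ≤ pitWeight (fun i => p i - u i) Y := hYmax A' hA'closed
end

section
/- Let U ⊆ V, let p, u : V → ℝ with u j > 0 for every j ∈ U and u j = 0 for j ∉ U, let D be the empty relation, and let R : V → V → Prop satisfy j ∈ U whenever R i j. Then every maximum-weight closed set Z of the layered digraph on V ⊕ V satisfies {j : Sum.inr j ∈ Z} ∩ U = {j : ∃ i, Sum.inl i ∈ Z ∧ R i j}; that is, in an optimal solution the only underground blocks made unavailable are precisely those forced by the pit through the crown-pillar arcs. -/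
lemma pitWeight_remove {V : Type*} [Fintype V] (w : V → ℝ) (Z : Set V) (x : V)
    (hx : x ∈ Z) : pitWeight w Z = pitWeight w (Z \ {x}) + w x := by
  classical
  unfold pitWeight
  have h : ∀ i, Z.indicator w i = (Z \ {x}).indicator w i + (if i = x then w x else 0) := by
    intro i
    by_cases hi : i = x
    · subst hi; simp [Set.indicator_apply, hx]
    · simp [Set.indicator_apply, hi]
  rw [Finset.sum_congr rfl (fun i _ => h i), Finset.sum_add_distrib,
    Finset.sum_ite_eq' Finset.univ x (fun _ => w x)]
  simp

theorem optimal_unavailable_blocks_are_exactly_forced {V : Type*} [Fintype V]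
    (B R : V → V → Prop) (U : Set V) (p u : V → ℝ)
    (huPos : ∀ j ∈ U, 0 < u j) (huU : ∀ j ∉ U, u j = 0)
    (hR : ∀ i j, R i j → j ∈ U)
    (Z : Set (V ⊕ V))
    (hZ : IsMaxClosed (LayeredArc B R (fun _ _ => False)) (layeredWeight p u) Z) :
    {j | Sum.inr j ∈ Z} ∩ U = {j | ∃ i, Sum.inl i ∈ Z ∧ R i j} := by
  obtain ⟨hclosed, hmax⟩ := hZ
  ext j
  simp only [Set.mem_inter_iff, Set.mem_setOf_eq]
  constructor
  · rintro ⟨hjZ, hjU⟩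
    by_contra hforced
    push_neg at hforced
    -- remove inr j from Z; still closed and strictly heavier
    set Z' : Set (V ⊕ V) := Z \ {Sum.inr j} with hZ'
    have hc : ClosedFor (LayeredArc B R (fun _ _ => False)) Z' := by
      rintro y ⟨hyZ, hyne⟩ y' harc
      refine ⟨hclosed y hyZ y' harc, ?_⟩
      intro hy'
      simp only [Set.mem_singleton_iff] at hy'
      subst hy'
      cases y with
      | inl i => exact hforced i hyZ harc
      | inr i => exact harc
    have hle := hmax Z' hc
    have heq := pitWeight_remove (layeredWeight p u) Z (Sum.inr j) hjZ
    have hw : layeredWeight p u (Sum.inr j) = -u j := rfl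
    have hpos := huPos j hjU
    rw [hw] at heq
    linarith
  · rintro ⟨i, hiZ, hRij⟩
    exact ⟨hclosed (Sum.inl i) hiZ (Sum.inr j) hRij, hR i j hRij⟩
end
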